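/- arXiv:1605.06577 — 3 statements merged into one kernel-verified Lean document; each statement's English description precedes it below -/
import Mathlib

section
/- Let s ≥ r ≥ 2 be positive integers and let A be a pattern with r classes on the positions of an m'×n' array. Then for all positive integers m, n, every m×n matrix M with at most s distinct entries can be changed in at most ((s−r+1)/s)·mn positions to obtain a matrix with at most s distinct entries containing no subpattern A; that is, f(m,n; s, A) ≤ ((s−r+1)/s)·mn. -/
open Finset

/-- An `m × n` matrix `M` contains a submatrix (given by distinct row indices `φ` and distinct
column indices `ψ`) whose equality pattern of entries is exactly the partition pattern `P`
(a surjective labeling of positions of an `m' × n'` array by `r` classes). -/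
def HasSubpattern {m n m' n' r : ℕ} {α : Type*} (M : Fin m → Fin n → α)
    (P : Fin m' × Fin n' → Fin r) : Prop :=
  ∃ φ : Fin m' ↪ Fin m, ∃ ψ : Fin n' ↪ Fin n,
    ∀ i i' : Fin m', ∀ j j' : Fin n',
      (M (φ i) (ψ j) = M (φ i') (ψ j') ↔ P (i, j) = P (i', j'))

/-- The Hamming distance between two matrices: the number of positions where they differ. -/
def MatDist {m n : ℕ} {α : Type*} [DecidableEq α] (M M' : Fin m → Fin n → α) : ℕ :=
  (univ.filter fun p : Fin m × Fin n => M p.1 p.2 ≠ M' p.1 p.2).card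

/-- **Upper bound for matrix editing.**  Let `s ≥ r ≥ 2` and let `P` be a pattern with `r`
nonempty classes on an `m' × n'` array.  Then for all positive `m, n`, every `m × n` matrix with
at most `s` distinct entries can be changed in at most `((s-r+1)/s) mn` positions to obtain a
matrix with at most `s` distinct entries containing no subpattern `P`;
i.e. `f(m,n; s, P) ≤ ((s-r+1)/s) mn`. -/
theorem matrix_editing_upper_bound
    (s r m' n' : ℕ) (hr : 2 ≤ r) (hrs : r ≤ s)
    (P : Fin m' × Fin n' → Fin r) (hP : Function.Surjective P)
    (m n : ℕ) (hm : 0 < m) (hn : 0 < n) :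
    ∀ M : Fin m → Fin n → Fin s, ∃ F : Fin m → Fin n → Fin s,
      ¬ HasSubpattern F P ∧
      (MatDist M F : ℝ) ≤ (((s : ℝ) - r + 1) / s) * m * n := by
  classical
  intro M
  set k := r - 1 with hk
  have hk1 : 1 ≤ k := by omega
  have hks : k < s := by omega
  set cnt : Fin s → ℕ :=
    fun c => (univ.filter fun p : Fin m × Fin n => M p.1 p.2 = c).card with hcnt
  have htotal : ∑ c, cnt c = m * n := by
    have h := Finset.card_eq_sum_card_fiberwise
      (s := (univ : Finset (Fin m × Fin n))) (t := (univ : Finset (Fin s)))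
      (f := fun p => M p.1 p.2) (fun x _ => mem_univ _)
    simp only [card_univ, Fintype.card_prod, Fintype.card_fin] at h
    exact h.symm
  -- choose a k-element subset T of values maximizing the total count
  have hne : ((univ : Finset (Fin s)).powersetCard k).Nonempty := by
    rw [Finset.powersetCard_nonempty]
    simp [le_of_lt hks]
  obtain ⟨T, hTmem, hTmax⟩ :=
    Finset.exists_max_image _ (fun T => ∑ c ∈ T, cnt c) hne
  have hTcard : T.card = k := (Finset.mem_powersetCard.mp hTmem).2
  have hswap : ∀ d, d ∉ T → ∀ c ∈ T, cnt d ≤ cnt c := by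
    intro d hd c hc
    have hdnot : d ∉ T.erase c := fun h => hd (erase_subset _ _ h)
    have h1 : insert d (T.erase c) ∈ (univ : Finset (Fin s)).powersetCard k := by
      rw [Finset.mem_powersetCard]
      refine ⟨subset_univ _, ?_⟩
      rw [card_insert_of_notMem hdnot, card_erase_of_mem hc, hTcard]
      omega
    have h2 := hTmax _ h1
    rw [sum_insert hdnot] at h2
    have h3 : ∑ c' ∈ T.erase c, cnt c' + cnt c = ∑ c' ∈ T, cnt c' :=
      Finset.sum_erase_add _ _ hc
    omega
  have hTne : T.Nonempty := Finset.card_pos.mp (by omega)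
  obtain ⟨c0, hc0T, hc0min⟩ := Finset.exists_min_image T cnt hTne
  set a := ∑ c ∈ T, cnt c with hadef
  set b := ∑ c ∈ univ \ T, cnt c with hbdef
  have hsplit : b + a = m * n := by
    rw [hadef, hbdef, Finset.sum_sdiff (subset_univ T)]
    exact htotal
  have ha : k * cnt c0 ≤ a := by
    have := Finset.card_nsmul_le_sum T cnt (cnt c0) (fun x hx => hc0min x hx)
    simpa [hTcard, smul_eq_mul] using this
  have hb : b ≤ (s - k) * cnt c0 := by
    have := Finset.sum_le_card_nsmul (univ \ T) cnt (cnt c0)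
      (fun x hx => hswap x (mem_sdiff.mp hx).2 c0 hc0T)
    have hcard : (univ \ T).card = s - k := by
      rw [card_sdiff_of_subset (subset_univ T), hTcard, card_univ, Fintype.card_fin]
    simpa [hcard, smul_eq_mul] using this
  have hkey : k * (m * n) ≤ s * a := by
    set u := s - k with hu
    have hku : k + u = s := by omega
    have h1 : k * b ≤ k * (u * cnt c0) := Nat.mul_le_mul le_rfl hb
    have h2 : u * (k * cnt c0) ≤ u * a := Nat.mul_le_mul le_rfl ha
    nlinarith [hsplit, hku]
  -- define the edited matrix
  set F : Fin m → Fin n → Fin s :=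
    fun i j => if M i j ∈ T then M i j else c0 with hF
  refine ⟨F, ?_, ?_⟩
  · -- no subpattern
    rintro ⟨φ, ψ, h⟩
    have hrange : ∀ i j, F (φ i) (ψ j) ∈ T := by
      intro i j
      simp only [hF]
      split
      · assumption
      · exact hc0T
    choose pick hpick using hP
    have hinj : Set.InjOn (fun t : Fin r => F (φ (pick t).1) (ψ (pick t).2))
        ↑(univ : Finset (Fin r)) := by
      intro t _ t' _ ht
      have h' := (h (pick t).1 (pick t').1 (pick t).2 (pick t').2).mp ht
      rw [Prod.mk.eta, Prod.mk.eta, hpick, hpick] at h'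
      exact h'
    have hcard := Finset.card_le_card_of_injOn _ (fun t _ => hrange _ _) hinj
    simp only [card_univ, Fintype.card_fin, hTcard] at hcard
    omega
  · -- distance bound
    have hdiff : (univ.filter fun p : Fin m × Fin n => M p.1 p.2 ≠ F p.1 p.2)
        = (univ.filter fun p : Fin m × Fin n => M p.1 p.2 ∉ T) := by
      ext p
      simp only [mem_filter, mem_univ, true_and, hF]
      by_cases hmem : M p.1 p.2 ∈ T
      · simp [hmem]
      · simp only [hmem, if_neg, not_false_iff, iff_true]
        exact fun hEq => hmem (hEq ▸ hc0T)
    have hc1 : (univ.filter fun p : Fin m × Fin n => M p.1 p.2 ∈ T).card = a := by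
      have h := Finset.card_eq_sum_card_fiberwise
        (s := univ.filter fun p : Fin m × Fin n => M p.1 p.2 ∈ T) (t := T)
        (f := fun p => M p.1 p.2) (fun x hx => (mem_filter.mp hx).2)
      rw [h, hadef]
      refine Finset.sum_congr rfl fun c hc => ?_
      congr 1
      ext p
      simp only [mem_filter, mem_univ, true_and]
      constructor
      · rintro ⟨_, h2⟩; exact h2
      · intro h2; exact ⟨h2 ▸ hc, h2⟩
    have hc2 : (univ.filter fun p : Fin m × Fin n => M p.1 p.2 ∈ T).card
        + (univ.filter fun p : Fin m × Fin n => M p.1 p.2 ∉ T).card = m * n := by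
      rw [Finset.card_filter_add_card_filter_not]
      simp [card_univ]
    have hMD : MatDist M F = m * n - a := by
      rw [MatDist, hdiff]
      omega
    rw [hMD]
    have haletotal : a ≤ m * n := by omega
    rw [Nat.cast_sub haletotal]
    have hs0 : (0:ℝ) < s := by exact_mod_cast (by omega : 0 < s)
    rw [div_mul_eq_mul_div, div_mul_eq_mul_div, le_div_iff₀ hs0]
    have hkeyR : (k:ℝ) * (m * n) ≤ (s:ℝ) * a := by exact_mod_cast hkey
    have hkR : (k:ℝ) = (r:ℝ) - 1 := by
      rw [hk, Nat.cast_sub (by omega : 1 ≤ r)]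
      norm_num
    rw [hkR] at hkeyR
    push_cast
    nlinarith [hkeyR]
end

section
/- Let s ≥ r ≥ 2 be positive integers and let A be a pattern with r color classes on the edges of the complete bipartite graph K_{m',n'}. Then for all positive integers m, n, F(m,n; s, A) ≤ ((s−r+1)/s)·mn; that is, for every edge-coloring c of K_{m,n} with colors from [s], there is an edge-coloring c' of K_{m,n} with colors from [s] that contains no occurrence of the pattern A and differs from c on at most ((s−r+1)/s)·mn edges. -/
open Finset

/-- A coloring `c` of the edges of `K_{m,n}` contains an occurrence of the pattern `P`
(a surjective labeling of the edges of `K_{m',n'}` by `r` classes): there exist injections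
`φ`, `ψ` of the two sides such that colors agree exactly on positions in the same class. -/
def ContainsPattern {m n m' n' r s : ℕ} (c : Fin m → Fin n → Fin s)
    (P : Fin m' × Fin n' → Fin r) : Prop :=
  ∃ φ : Fin m' ↪ Fin m, ∃ ψ : Fin n' ↪ Fin n,
    ∀ i i' : Fin m', ∀ j j' : Fin n',
      (c (φ i) (ψ j) = c (φ i') (ψ j') ↔ P (i, j) = P (i', j'))

/-- The number of edges of `K_{m,n}` on which the colorings `c` and `c'` differ. -/
def ColDist {m n s : ℕ} (c c' : Fin m → Fin n → Fin s) : ℕ :=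
  (univ.filter fun p : Fin m × Fin n => c p.1 p.2 ≠ c' p.1 p.2).card

/-!
Let `T` be the `s - r + 1` least frequent colors of `c`; together they cover at most a
`(s - r + 1)/s` fraction of the edges. Recoloring all of them by one color outside `T` leaves
at most `r - 1` colors in use, too few to realize a pattern with `r` classes.
-/

theorem exists_card_eq_card_mul_sum_le {ι : Type*} [Fintype ι] [DecidableEq ι] (f : ι → ℕ)
    (k : ℕ) (hk : k ≤ Fintype.card ι) : ∃ T : Finset ι, #T = k ∧
      Fintype.card ι * ∑ a ∈ T, f a ≤ k * ∑ a, f a := by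
  induction k with
  | zero => exact ⟨∅, by simp⟩
  | succ k ih =>
    -- greedily add the least value outside `T`, which is at most the average outside `T`
    obtain ⟨T, hT, hTsum⟩ := ih (by omega)
    have hTc : #Tᶜ = Fintype.card ι - k := by rw [card_compl, hT]
    obtain ⟨a, haT, hmin⟩ := exists_min_image Tᶜ f (card_pos.mp (by omega : 0 < #Tᶜ))
    have hsplit := sum_compl_add_sum T f
    have hfa : #Tᶜ * f a ≤ ∑ b ∈ Tᶜ, f b := by
      simpa using card_nsmul_le_sum Tᶜ f (f a) hmin
    refine ⟨insert a T, by rw [card_insert_of_notMem (mem_compl.mp haT), hT], ?_⟩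
    rw [sum_insert (mem_compl.mp haT)]
    obtain ⟨d, hd⟩ : ∃ d, Fintype.card ι = k + 1 + d := ⟨Fintype.card ι - (k + 1), by omega⟩
    rw [hd] at hTsum ⊢
    rw [hTc, hd, show k + 1 + d - k = d + 1 by omega] at hfa
    nlinarith

theorem not_containsPattern_of_forall_mem {m n m' n' r s : ℕ} {c : Fin m → Fin n → Fin s}
    {P : Fin m' × Fin n' → Fin r} (hP : Function.Surjective P) {U : Finset (Fin s)}
    (hc : ∀ i j, c i j ∈ U) (hU : #U < r) : ¬ ContainsPattern c P := by
  rintro ⟨φ, ψ, hφψ⟩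
  choose e he using hP
  let classColor : Fin r → Fin s := fun t => c (φ (e t).1) (ψ (e t).2)
  have hinj : Function.Injective classColor := fun t t' htt => by
    simpa only [he] using (hφψ (e t).1 (e t').1 (e t).2 (e t').2).mp htt
  have := card_le_card_of_injOn (s := univ) classColor (fun t _ => hc _ _) hinj.injOn
  simp only [card_univ, Fintype.card_fin] at this
  omega

section Recoloring

variable {m n s : ℕ} (c : Fin m → Fin n → Fin s)

def recolor (T : Finset (Fin s)) (t : Fin s) : Fin m → Fin n → Fin s :=
  fun i j => if c i j ∈ T then t else c i j

theorem recolor_mem_compl {T : Finset (Fin s)} {t : Fin s} (ht : t ∉ T) (i : Fin m) (j : Fin n) :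
    recolor c T t i j ∈ Tᶜ := by
  unfold recolor
  split_ifs with h <;> simpa

def colorCount (a : Fin s) : ℕ :=
  #{p : Fin m × Fin n | c p.1 p.2 = a}

theorem sum_colorCount : ∑ a, colorCount c a = m * n := by
  simp [colorCount, sum_card_fiberwise_eq_card_filter]

theorem colDist_recolor {T : Finset (Fin s)} {t : Fin s} (ht : t ∉ T) :
    ColDist c (recolor c T t) = ∑ a ∈ T, colorCount c a := by
  simp only [colorCount, ColDist, sum_card_fiberwise_eq_card_filter]
  congr 1
  refine filter_congr fun p _ => ?_
  unfold recolor
  split_ifs with h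
  · exact ⟨fun _ => h, fun _ heq => ht (heq ▸ h)⟩
  · simpa using h

end Recoloring

theorem coloring_editing_upper_bound_general
    (s r m' n' : ℕ) (hr : 2 ≤ r) (hrs : r ≤ s)
    (P : Fin m' × Fin n' → Fin r) (hP : Function.Surjective P)
    (m n : ℕ) :
    ∀ c : Fin m → Fin n → Fin s, ∃ c' : Fin m → Fin n → Fin s,
      ¬ ContainsPattern c' P ∧
      (ColDist c c' : ℝ) ≤ (((s : ℝ) - r + 1) / s) * m * n := by
  intro c
  obtain ⟨T, hT, hTsum⟩ :=
    exists_card_eq_card_mul_sum_le (colorCount c) (s - r + 1) (by rw [Fintype.card_fin]; omega)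
  have hTc : #Tᶜ = r - 1 := by rw [card_compl, hT, Fintype.card_fin]; omega
  obtain ⟨t, ht⟩ := card_pos.mp (by omega : 0 < #Tᶜ)
  refine ⟨recolor c T t, not_containsPattern_of_forall_mem hP
    (recolor_mem_compl c (mem_compl.mp ht)) (by omega), ?_⟩
  rw [Fintype.card_fin, sum_colorCount, ← colDist_recolor c (mem_compl.mp ht)] at hTsum
  have hs : (0 : ℝ) < s := by exact_mod_cast (by omega : 0 < s)
  have hsumR : (s : ℝ) * ColDist c (recolor c T t) ≤ ((s - r + 1 : ℕ) : ℝ) * (m * n) := by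
    exact_mod_cast hTsum
  rw [Nat.cast_add, Nat.cast_sub hrs, Nat.cast_one] at hsumR
  rw [div_mul_eq_mul_div, div_mul_eq_mul_div, le_div_iff₀ hs]
  linarith

/-- **Upper bound, graph form.**  Let `s ≥ r ≥ 2` and let `P` be a pattern with `r` nonempty
color classes on the edges of `K_{m',n'}`.  Then `F(m,n; s, P) ≤ ((s-r+1)/s) mn`: every
edge-coloring `c` of `K_{m,n}` with colors from `[s]` can be recolored on at most
`((s-r+1)/s) mn` edges so that the result contains no occurrence of `P`. -/
theorem coloring_editing_upper_bound
    (s r m' n' : ℕ) (hr : 2 ≤ r) (hrs : r ≤ s)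
    (P : Fin m' × Fin n' → Fin r) (hP : Function.Surjective P)
    (m n : ℕ) (hm : 0 < m) (hn : 0 < n) :
    ∀ c : Fin m → Fin n → Fin s, ∃ c' : Fin m → Fin n → Fin s,
      ¬ ContainsPattern c' P ∧
      (ColDist c c' : ℝ) ≤ (((s : ℝ) - r + 1) / s) * m * n :=
  coloring_editing_upper_bound_general s r m' n' hr hrs P hP m n
end

section
/- (Many-Color Intersection Property) Let ε > 0 and δ > 0 be fixed and let r and ℓ be positive integers. Let (A,B) be a pair of disjoint finite sets with an edge-coloring such that for each color ν ∈ [r], the pair (A,B) is ε-regular in color ν with density d_ν = d_ν(A,B) ≥ δ. Let Y ⊆ B satisfy (δ−ε)^{ℓ−1}·|Y| > ε·|B|. Let k₁,…,k_r be positive integers with k₁+⋯+k_r = ℓ, and index vectors a ∈ A^ℓ as a = (a_{[1,1]},…,a_{[1,k₁]}, a_{[2,1]},…,a_{[r,k_r]}). Then the number of vectors a ∈ A^ℓ for which |Y ∩ ⋂_{ν=1}^{r} ⋂_{i=1}^{k_ν} N_ν(a_{[ν,i]})| < ∏_{ν=1}^{r} (d_ν − ε)^{k_ν} · |Y| is at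 most ℓ·ε·|A|^ℓ. -/
open Finset

attribute [local instance] Classical.propDecidable

/-- The density of the color `ν` on the pair `(X', Y')` under the edge-coloring `c`. -/
noncomputable def colDensity {V : Type*} (c : V → V → ℕ) (ν : ℕ)
    (X' Y' : Finset V) : ℝ :=
  (((X' ×ˢ Y').filter fun p => c p.1 p.2 = ν).card : ℝ) / ((X'.card : ℝ) * (Y'.card : ℝ))

/-- The pair `(X, Y)` is `ε`-regular in color `ν` under the coloring `c`. -/
def EpsRegular {V : Type*} (ε : ℝ) (c : V → V → ℕ) (ν : ℕ)
    (X Y : Finset V) : Prop :=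
  ∀ X' ⊆ X, ∀ Y' ⊆ Y, ε * (X.card : ℝ) ≤ (X'.card : ℝ) →
    ε * (Y.card : ℝ) ≤ (Y'.card : ℝ) →
    |colDensity c ν X Y - colDensity c ν X' Y'| < ε

/-- The color-`ν` neighborhood in `B` of a vertex `x`. -/
def colNbhd {V : Type*} (c : V → V → ℕ) (ν : ℕ) (B : Finset V) (x : V) : Finset V :=
  B.filter fun y => c x y = ν

/-!
Induct on `ℓ`, revealing the first coordinate `x` of `a`. Either `x` is one of the at most
`ε |A|` vertices whose neighbourhood meets `Y` in fewer than `(d - ε) |Y|` points, which accounts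
for at most `ε |A| · |A|^(ℓ-1)` vectors, or it leaves a set `Y' ⊆ Y` with `|Y'| ≥ (d - ε) |Y|`, to
which the induction hypothesis applies. Regularity can be invoked at every stage because each set
reached this way has size at least `(δ - ε)^(ℓ-1) |Y| > ε |B|`.
-/

namespace Finset

variable {α β : Type*}

lemma card_filter_product (s : Finset α) (t : Finset β) (r : α → β → Prop)
    [∀ x y, Decidable (r x y)] :
    #{q ∈ s ×ˢ t | r q.1 q.2} = ∑ x ∈ s, #{y ∈ t | r x y} := by
  simp only [card_filter, sum_product]

lemma card_eq_sum_card_cons_mem {n : ℕ} {A : Finset α} {s : Finset (Fin (n + 1) → α)}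
    (hs : s ⊆ Fintype.piFinset fun _ => A) :
    #s = ∑ x ∈ A, #{a ∈ Fintype.piFinset fun _ => A | Fin.cons x a ∈ s} := by
  rw [← card_filter_product]
  refine card_nbij' (fun a => (a 0, Fin.tail a)) (fun q => Fin.cons q.1 q.2) ?_ ?_ ?_ ?_
  · intro a ha
    have := hs ha
    simp_all [Fintype.mem_piFinset, Fin.forall_fin_succ, Fin.tail]
  · intro q hq
    simp_all
  · intro a _
    simp
  · intro q _
    simp

lemma prod_pow_eq_prod_comp {ι κ M : Type*} [Fintype ι] [DecidableEq κ] [CommMonoid M]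
    {s : Finset κ} {g : ι → κ} {k : κ → ℕ} (hg : ∀ i, g i ∈ s)
    (hk : ∀ j ∈ s, #{i | g i = j} = k j) (f : κ → M) :
    ∏ j ∈ s, f j ^ k j = ∏ i, f (g i) := by
  rw [← prod_fiberwise_of_maps_to' (fun i _ => hg i)]
  exact prod_congr rfl fun j hj => by rw [prod_const, hk j hj]

lemma mem_of_sum_card_fiber_eq {ι κ : Type*} [Fintype ι] [DecidableEq κ] {s : Finset κ}
    {g : ι → κ} {k : κ → ℕ} (hk : ∀ j ∈ s, #{i | g i = j} = k j)
    (hsum : ∑ j ∈ s, k j = Fintype.card ι) (i : ι) : g i ∈ s := by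
  have h : #{i | g i ∈ s} = #(univ : Finset ι) := by
    rw [← sum_card_fiberwise_eq_card_filter, sum_congr rfl hk, hsum, card_univ]
  exact card_filter_eq_iff.1 h i (mem_univ i)

end Finset

section PartialProd

variable {R : Type*} [CommSemiring R] [PartialOrder R] [IsOrderedRing R] {n : ℕ} {p : Fin n → R}

lemma Fin.partialProd_nonneg (hp : ∀ i, 0 ≤ p i) (i : Fin (n + 1)) :
    0 ≤ Fin.partialProd p i :=
  i.inductionOn (by simp) fun i hi => by
    rw [Fin.partialProd_succ]
    exact mul_nonneg hi (hp i)

lemma pow_le_partialProd {θ : R} (hθ : 0 ≤ θ) (hp : ∀ i, θ ≤ p i) (i : Fin (n + 1)) :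
    θ ^ (i : ℕ) ≤ Fin.partialProd p i :=
  i.inductionOn (by simp) fun i hi => by
    rw [Fin.partialProd_succ, Fin.val_succ, pow_succ]
    exact mul_le_mul hi (hp i) hθ (Fin.partialProd_nonneg (fun t => hθ.trans (hp t)) _)

lemma le_partialProd_tail_mul {p : Fin (n + 1) → R} (hp : ∀ i, 0 ≤ p i) {τ y y' : R}
    (hy : p 0 * y ≤ y') (i : Fin n) (h : τ ≤ Fin.partialProd p i.succ.castSucc * y) :
    τ ≤ Fin.partialProd (Fin.tail p) i.castSucc * y' := by
  rw [← Fin.succ_castSucc, Fin.partialProd_succ'] at h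
  calc τ ≤ _ := h
    _ = Fin.partialProd (Fin.tail p) i.castSucc * (p 0 * y) := by ring
    _ ≤ _ := mul_le_mul_of_nonneg_left hy (Fin.partialProd_nonneg (fun i => hp i.succ) _)

end PartialProd

section Counting

variable {α β : Type*} [DecidableEq β]

noncomputable def badVertices (A : Finset α) (N : α → Finset β) (p : ℝ) (Y : Finset β) :
    Finset α :=
  {x ∈ A | (#{y ∈ Y | y ∈ N x} : ℝ) < p * #Y}

lemma badVertices_subset (A : Finset α) (N : α → Finset β) (p : ℝ) (Y : Finset β) :
    badVertices A N p Y ⊆ A :=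
  filter_subset _ _

noncomputable def badTuples {n : ℕ} (A : Finset α) (S : Fin n → α → Finset β) (p : Fin n → ℝ)
    (Y : Finset β) : Finset (Fin n → α) :=
  {a ∈ Fintype.piFinset fun _ => A | (#{y ∈ Y | ∀ t, y ∈ S t (a t)} : ℝ) < (∏ t, p t) * #Y}

lemma badTuples_eq_empty_of_prod_nonpos {n : ℕ} (A : Finset α) (S : Fin n → α → Finset β)
    {p : Fin n → ℝ} (hp : ∏ t, p t ≤ 0) (Y : Finset β) :
    badTuples A S p Y = ∅ :=
  filter_false_of_mem fun _ _ h =>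
    (h.trans_le (mul_nonpos_of_nonpos_of_nonneg hp (Nat.cast_nonneg _))).not_ge (Nat.cast_nonneg _)

lemma filter_cons_mem_badTuples_subset {n : ℕ} {A : Finset α} {S : Fin (n + 1) → α → Finset β}
    {p : Fin (n + 1) → ℝ} (hp : ∀ t, 0 ≤ p t) {Y : Finset β} {x : α}
    (hx : p 0 * #Y ≤ #{y ∈ Y | y ∈ S 0 x}) :
    {a ∈ Fintype.piFinset (fun _ : Fin n => A) | Fin.cons x a ∈ badTuples A S p Y} ⊆
      badTuples A (Fin.tail S) (Fin.tail p) {y ∈ Y | y ∈ S 0 x} := by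
  intro a ha
  simp only [badTuples, mem_filter, Fin.mem_piFinset_iff_zero_tail, Fin.tail_cons,
    Fin.prod_univ_succ, Fin.forall_fin_succ, Fin.cons_zero, Fin.cons_succ] at ha ⊢
  refine ⟨ha.2.1.2, ?_⟩
  rw [filter_filter]
  calc _ < p 0 * (∏ t : Fin n, p t.succ) * #Y := ha.2.2
    _ = (∏ t : Fin n, p t.succ) * (p 0 * #Y) := by ring
    _ ≤ _ := mul_le_mul_of_nonneg_left hx (prod_nonneg fun t _ => hp t.succ)

theorem card_badTuples_le {n : ℕ} (A : Finset α) (S : Fin n → α → Finset β) (p : Fin n → ℝ)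
    (hp : ∀ t, 0 ≤ p t) {τ ε : ℝ} (hε : 0 ≤ ε) (Y : Finset β)
    (hbad : ∀ t, ∀ Y' ⊆ Y, τ ≤ #Y' → (#(badVertices A (S t) (p t) Y') : ℝ) ≤ ε * #A)
    (hlarge : ∀ t : Fin n, τ ≤ Fin.partialProd p t.castSucc * #Y) :
    (#(badTuples A S p Y) : ℝ) ≤ n * ε * #A ^ n := by
  induction n generalizing Y with
  | zero => simp [badTuples]
  | succ n ih =>
    set Y₀ := badVertices A (S 0) (p 0) Y
    have hslice : ∀ x ∈ A,
        (#{a ∈ Fintype.piFinset (fun _ : Fin n => A) | Fin.cons x a ∈ badTuples A S p Y} : ℝ)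
          ≤ (if x ∈ Y₀ then (#A : ℝ) ^ n else 0) + n * ε * #A ^ n := by
      intro x hxA
      split_ifs with hx
      · calc _ ≤ (#(Fintype.piFinset fun _ : Fin n => A) : ℝ) := by
              exact_mod_cast card_filter_le _ _
          _ = (#A : ℝ) ^ n := by simp
          _ ≤ _ := le_add_of_nonneg_right (by positivity)
      · have hgood : p 0 * #Y ≤ #{y ∈ Y | y ∈ S 0 x} := by
          simpa [Y₀, badVertices, hxA] using hx
        have hrec := ih (Fin.tail S) (Fin.tail p) (fun t => hp t.succ) {y ∈ Y | y ∈ S 0 x}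
          (fun t Y' hY' => hbad t.succ Y' (hY'.trans (filter_subset _ _)))
          (fun t => le_partialProd_tail_mul hp hgood t (hlarge _))
        rw [zero_add]
        exact le_trans (by exact_mod_cast card_le_card (filter_cons_mem_badTuples_subset hp hgood))
          hrec
    calc (#(badTuples A S p Y) : ℝ)
        ≤ ∑ x ∈ A, ((if x ∈ Y₀ then (#A : ℝ) ^ n else 0) + n * ε * #A ^ n) := by
          rw [card_eq_sum_card_cons_mem (s := badTuples A S p Y) (filter_subset _ _)]
          push_cast
          exact sum_le_sum hslice
      _ = #Y₀ * (#A : ℝ) ^ n + #A * (n * ε * #A ^ n) := by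
          rw [sum_add_distrib, sum_ite_mem, inter_eq_right.2 (badVertices_subset ..), sum_const,
            sum_const, nsmul_eq_mul, nsmul_eq_mul]
      _ ≤ ε * #A * #A ^ n + #A * (n * ε * #A ^ n) := by
          gcongr
          exact hbad 0 Y subset_rfl (by simpa using hlarge 0)
      _ = (n + 1 : ℕ) * ε * #A ^ (n + 1) := by push_cast; ring

theorem card_badTuples_le_of_pow_le {n : ℕ} (A : Finset α) (S : Fin n → α → Finset β)
    (p : Fin n → ℝ) {θ τ ε : ℝ} (hθ : 0 ≤ θ) (hθ1 : θ ≤ 1) (hθp : ∀ t, θ ≤ p t) (hε : 0 ≤ ε)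
    (Y : Finset β)
    (hbad : ∀ t, ∀ Y' ⊆ Y, τ ≤ #Y' → (#(badVertices A (S t) (p t) Y') : ℝ) ≤ ε * #A)
    (hY : τ ≤ θ ^ (n - 1) * #Y) :
    (#(badTuples A S p Y) : ℝ) ≤ n * ε * #A ^ n := by
  refine card_badTuples_le A S p (fun t => hθ.trans (hθp t)) hε Y hbad fun t => ?_
  calc τ ≤ θ ^ (n - 1) * #Y := hY
    _ ≤ θ ^ (t : ℕ) * #Y := by
      gcongr ?_ * _
      exact pow_le_pow_of_le_one hθ hθ1 (by omega)
    _ ≤ Fin.partialProd p t.castSucc * #Y := by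
      gcongr
      exact pow_le_partialProd hθ hθp t.castSucc

end Counting

lemma colDensity_le_one {V : Type*} (c : V → V → ℕ) (ν : ℕ) (X Y : Finset V) :
    colDensity c ν X Y ≤ 1 := by
  unfold colDensity
  rw [← Nat.cast_mul, ← card_product]
  exact div_le_one_of_le₀ (by exact_mod_cast card_filter_le _ _) (Nat.cast_nonneg _)

lemma card_badVertices_colNbhd_le {V : Type*} [DecidableEq V] {ε : ℝ} (hε : 0 ≤ ε)
    {c : V → V → ℕ} {ν : ℕ} {A B : Finset V} (hreg : EpsRegular ε c ν A B) {Y : Finset V}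
    (hYB : Y ⊆ B) (hY : ε * #B ≤ #Y) :
    (#(badVertices A (colNbhd c ν B) (colDensity c ν A B - ε) Y) : ℝ) ≤ ε * #A := by
  set X := badVertices A (colNbhd c ν B) (colDensity c ν A B - ε) Y
  by_contra! hX
  have hXpos : (0 : ℝ) < #X := (by positivity : 0 ≤ ε * #A).trans_lt hX
  obtain ⟨x₀, hx₀⟩ : X.Nonempty := card_pos.1 (by exact_mod_cast hXpos)
  have hnbhd : ∀ x, {y ∈ Y | y ∈ colNbhd c ν B x} = {y ∈ Y | c x y = ν} := fun x =>
    filter_congr fun y hy => by simp [colNbhd, hYB hy]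
  have hYpos : (0 : ℝ) < #Y := by
    have h := (mem_filter.1 hx₀).2
    by_contra! h0
    rw [le_antisymm h0 (Nat.cast_nonneg _), mul_zero] at h
    exact (Nat.cast_nonneg _).not_gt h
  have hdens : colDensity c ν X Y < colDensity c ν A B - ε := by
    rw [colDensity, card_filter_product (r := fun x y => c x y = ν), div_lt_iff₀ (by positivity)]
    push_cast
    calc ∑ x ∈ X, (#{y ∈ Y | c x y = ν} : ℝ)
        < ∑ x ∈ X, (colDensity c ν A B - ε) * #Y :=
          sum_lt_sum_of_nonempty ⟨x₀, hx₀⟩ fun x hx => hnbhd x ▸ (mem_filter.1 hx).2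
      _ = _ := by rw [sum_const, nsmul_eq_mul]; ring
  have := abs_lt.1 (hreg X (badVertices_subset ..) Y hYB hX.le hY)
  linarith

lemma lt_of_mul_lt_pow_sub_mul {ε δ y b : ℝ} {m : ℕ} (hδ : 0 < δ) (hε : ε < 1) (hm : m ≠ 0)
    (hy : 0 ≤ y) (hyb : y ≤ b) (h : ε * b < (δ - ε) ^ m * y) : ε < δ := by
  by_contra! hδε
  have hpow : (δ - ε) ^ m ≤ ε - δ :=
    calc (δ - ε) ^ m ≤ |δ - ε| ^ m := by rw [← abs_pow]; exact le_abs_self _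
      _ = (ε - δ) ^ m := by rw [abs_sub_comm, abs_of_nonneg (by linarith)]
      _ ≤ ε - δ := pow_le_of_le_one (by linarith) (by linarith) hm
  nlinarith [mul_le_mul_of_nonneg_right hpow hy]

lemma card_filter_piFinset_le_mul {α : Type*} {ℓ : ℕ} (hℓ : 0 < ℓ) {ε : ℝ} (hε : 1 ≤ ε)
    (A : Finset α) (P : (Fin ℓ → α) → Prop) [DecidablePred P] :
    (#{a ∈ Fintype.piFinset fun _ => A | P a} : ℝ) ≤ ℓ * ε * #A ^ ℓ :=
  calc _ ≤ (#(Fintype.piFinset fun _ : Fin ℓ => A) : ℝ) := by exact_mod_cast card_filter_le _ _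
    _ = 1 * (#A : ℝ) ^ ℓ := by simp
    _ ≤ ℓ * ε * #A ^ ℓ := by
      gcongr
      exact one_le_mul_of_one_le_of_one_le (by exact_mod_cast hℓ) hε

theorem many_color_intersection_property_general
    (ε δ : ℝ) (hε : 0 < ε) (hδ : 0 < δ) (r ℓ : ℕ) (hℓ : 0 < ℓ)
    {V : Type*} [DecidableEq V] (A B : Finset V)
    (c : V → V → ℕ)
    (hreg : ∀ ν ∈ Finset.Icc 1 r, EpsRegular ε c ν A B)
    (hdens : ∀ ν ∈ Finset.Icc 1 r, δ ≤ colDensity c ν A B)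
    (Y : Finset V) (hYB : Y ⊆ B)
    (hYsize : ε * (B.card : ℝ) < (δ - ε) ^ (ℓ - 1) * (Y.card : ℝ))
    (k : ℕ → ℕ)
    (hsum : ∑ ν ∈ Finset.Icc 1 r, k ν = ℓ)
    (col : Fin ℓ → ℕ)
    (hcol : ∀ ν ∈ Finset.Icc 1 r, (univ.filter fun t => col t = ν).card = k ν) :
    (((Fintype.piFinset fun _ : Fin ℓ => A).filter fun a =>
        ((Y.filter fun y => ∀ t : Fin ℓ, y ∈ colNbhd c (col t) B (a t)).card : ℝ) <
          (∏ ν ∈ Finset.Icc 1 r, (colDensity c ν A B - ε) ^ k ν) * (Y.card : ℝ)).card : ℝ)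
      ≤ (ℓ : ℝ) * ε * (A.card : ℝ) ^ ℓ := by
  rcases le_or_gt 1 ε with hε1 | hε1
  · exact card_filter_piFinset_le_mul hℓ hε1 A _
  have hcol_mem : ∀ t, col t ∈ Icc 1 r := mem_of_sum_card_fiber_eq hcol (by simpa using hsum)
  set p : Fin ℓ → ℝ := fun t => colDensity c (col t) A B - ε
  rw [prod_pow_eq_prod_comp hcol_mem hcol]
  change (#(badTuples A (fun t => colNbhd c (col t) B) p Y) : ℝ) ≤ _
  have hbad : ∀ t, ∀ Y' ⊆ Y, ε * #B ≤ #Y' →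
      (#(badVertices A (colNbhd c (col t) B) (p t) Y') : ℝ) ≤ ε * #A := fun t Y' hY' =>
    card_badVertices_colNbhd_le hε.le (hreg _ (hcol_mem t)) (hY'.trans hYB)
  obtain rfl | hℓ2 : ℓ = 1 ∨ 2 ≤ ℓ := by omega
  · -- a single factor `d - ε`, which may be negative
    by_cases hp : 0 ≤ p 0
    · refine card_badTuples_le_of_pow_le _ _ _ le_rfl zero_le_one
        (fun t => Fin.fin_one_eq_zero t ▸ hp) hε.le Y hbad ?_
      simpa using hYsize.le
    · rw [badTuples_eq_empty_of_prod_nonpos _ _ (by simpa using (not_le.1 hp).le), card_empty]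
      simp only [Nat.cast_zero]
      positivity
  · have hεδ : ε < δ := lt_of_mul_lt_pow_sub_mul hδ hε1 (by omega) (Nat.cast_nonneg _)
      (by exact_mod_cast card_le_card hYB) hYsize
    have hδ1 : δ ≤ 1 := (hdens _ (hcol_mem ⟨0, hℓ⟩)).trans (colDensity_le_one ..)
    exact card_badTuples_le_of_pow_le _ _ _ (sub_pos.2 hεδ).le (by linarith)
      (fun t => by linarith [hdens _ (hcol_mem t)]) hε.le Y hbad hYsize.le

/-- **Many-Color Intersection Property (Fact 2.2).**
Let `ε, δ > 0`, let `r, ℓ ≥ 1`, and let `(A, B)` be a pair whose edge-coloring is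
`ε`-regular in each of the colors `1, …, r`, with densities `d_ν ≥ δ`.  Let `Y ⊆ B` with
`(δ - ε)^(ℓ-1) |Y| > ε |B|`.  Let `k₁, …, k_r` be positive integers summing to `ℓ`, and index
vectors `a ∈ A^ℓ` in blocks, coordinate `t` belonging to the block of color `col t`, where
exactly `k ν` coordinates belong to the block of each color `ν`.  Then the number of vectors
`a ∈ A^ℓ` for which `|Y ∩ ⋂_ν ⋂_{col t = ν} N_ν(a_t)| < ∏_ν (d_ν - ε)^{k_ν} |Y|` is at most
`ℓ ε |A|^ℓ`. -/
theorem many_color_intersection_property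
    (ε δ : ℝ) (hε : 0 < ε) (hδ : 0 < δ) (r ℓ : ℕ) (hr : 0 < r) (hℓ : 0 < ℓ)
    {V : Type*} [DecidableEq V] (A B : Finset V) (hAB : Disjoint A B)
    (c : V → V → ℕ)
    (hreg : ∀ ν ∈ Finset.Icc 1 r, EpsRegular ε c ν A B)
    (hdens : ∀ ν ∈ Finset.Icc 1 r, δ ≤ colDensity c ν A B)
    (Y : Finset V) (hYB : Y ⊆ B)
    (hYsize : ε * (B.card : ℝ) < (δ - ε) ^ (ℓ - 1) * (Y.card : ℝ))
    (k : ℕ → ℕ) (hk : ∀ ν ∈ Finset.Icc 1 r, 0 < k ν)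
    (hsum : ∑ ν ∈ Finset.Icc 1 r, k ν = ℓ)
    (col : Fin ℓ → ℕ)
    (hcol : ∀ ν ∈ Finset.Icc 1 r, (univ.filter fun t => col t = ν).card = k ν) :
    (((Fintype.piFinset fun _ : Fin ℓ => A).filter fun a =>
        ((Y.filter fun y => ∀ t : Fin ℓ, y ∈ colNbhd c (col t) B (a t)).card : ℝ) <
          (∏ ν ∈ Finset.Icc 1 r, (colDensity c ν A B - ε) ^ k ν) * (Y.card : ℝ)).card : ℝ)
      ≤ (ℓ : ℝ) * ε * (A.card : ℝ) ^ ℓ :=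
  many_color_intersection_property_general ε δ hε hδ r ℓ hℓ A B c hreg hdens Y hYB hYsize k hsum col
    hcol
end
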